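/- arXiv:1811.02116 — 4 statements merged into one kernel-verified Lean document; each statement's English description precedes it below -/
import Mathlib

section
/- With A, B isometries as above and T = [[0, AᴴB],[BᴴA, 0]], the pair (f, g) ∈ ℂ^m × ℂ^n satisfies T(f ⊕ g) = f ⊕ g if and only if Af = Bg. -/
/-
The fixed-point equation of `T` says `f = AᴴB g` and `g = BᴴA f`. Pairing these with `f` and `g`
gives `⟪Af, Bg⟫ = ‖f‖²` and `⟪Bg, Af⟫ = ‖g‖²`, while `‖Af‖² = ‖f‖²` and `‖Bg‖² = ‖g‖²` because `A`
and `B` are isometries; expanding `‖Af - Bg‖²` then gives `0`. Conversely, `Af = Bg` yields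
`AᴴB g = AᴴA f = f` and symmetrically for `g`.
-/

namespace Matrix

variable {ι m n R : Type*} [Fintype ι] [Fintype m] [Fintype n]

lemma fromBlocks_zero_mulVec_sumElim_eq_iff [NonUnitalNonAssocSemiring R]
    (P : Matrix m n R) (Q : Matrix n m R) (f : m → R) (g : n → R) :
    fromBlocks 0 P Q 0 *ᵥ Sum.elim f g = Sum.elim f g ↔ P *ᵥ g = f ∧ Q *ᵥ f = g := by
  simp only [fromBlocks_mulVec, Sum.elim_comp_inl, Sum.elim_comp_inr, zero_mulVec, zero_add,
    add_zero, Sum.elim_eq_iff]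

lemma star_mulVec_dotProduct_mulVec [NonUnitalSemiring R] [StarRing R] (M : Matrix ι m R)
    (N : Matrix ι n R) (x : m → R) (y : n → R) :
    star (M *ᵥ x) ⬝ᵥ N *ᵥ y = star x ⬝ᵥ (Mᴴ * N) *ᵥ y := by
  rw [star_mulVec, dotProduct_mulVec, dotProduct_mulVec, vecMul_vecMul]

lemma conjTranspose_mul_mulVec_eq_of_mulVec_eq [Semiring R] [Star R] [DecidableEq m]
    {A : Matrix ι m R} {B : Matrix ι n R} (hA : Aᴴ * A = 1) {f : m → R} {g : n → R}
    (h : A *ᵥ f = B *ᵥ g) : (Aᴴ * B) *ᵥ g = f := by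
  rw [← mulVec_mulVec, ← h, mulVec_mulVec, hA, one_mulVec]

lemma mulVec_eq_mulVec_of_conjTranspose_mul_mulVec_eq [Ring R] [PartialOrder R] [StarRing R]
    [StarOrderedRing R] [NoZeroDivisors R] [DecidableEq m] [DecidableEq n]
    {A : Matrix ι m R} {B : Matrix ι n R} (hA : Aᴴ * A = 1) (hB : Bᴴ * B = 1)
    {f : m → R} {g : n → R} (hf : (Aᴴ * B) *ᵥ g = f) (hg : (Bᴴ * A) *ᵥ f = g) : A *ᵥ f = B *ᵥ g := by
  have hAA : star (A *ᵥ f) ⬝ᵥ A *ᵥ f = star f ⬝ᵥ f := by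
    rw [star_mulVec_dotProduct_mulVec, hA, one_mulVec]
  have hAB : star (A *ᵥ f) ⬝ᵥ B *ᵥ g = star f ⬝ᵥ f := by
    rw [star_mulVec_dotProduct_mulVec, hf]
  have hBA : star (B *ᵥ g) ⬝ᵥ A *ᵥ f = star g ⬝ᵥ g := by
    rw [star_mulVec_dotProduct_mulVec, hg]
  have hBB : star (B *ᵥ g) ⬝ᵥ B *ᵥ g = star g ⬝ᵥ g := by
    rw [star_mulVec_dotProduct_mulVec, hB, one_mulVec]
  have hnorm : star (A *ᵥ f - B *ᵥ g) ⬝ᵥ (A *ᵥ f - B *ᵥ g) = 0 := by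
    rw [star_sub, sub_dotProduct, dotProduct_sub, dotProduct_sub, hAA, hAB, hBA, hBB]
    abel
  exact sub_eq_zero.mp (dotProduct_star_self_eq_zero.mp hnorm)

end Matrix

open Matrix
open scoped ComplexOrder

theorem stmt_4 {ν m n : ℕ} (A : Matrix (Fin ν) (Fin m) ℂ) (B : Matrix (Fin ν) (Fin n) ℂ)
    (hA : Aᴴ * A = 1) (hB : Bᴴ * B = 1) (f : Fin m → ℂ) (g : Fin n → ℂ) :
    (fromBlocks 0 (Aᴴ * B) (Bᴴ * A) 0).mulVec (Sum.elim f g) = Sum.elim f g ↔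
      A.mulVec f = B.mulVec g := by
  rw [fromBlocks_zero_mulVec_sumElim_eq_iff]
  refine ⟨fun ⟨hf, hg⟩ ↦ mulVec_eq_mulVec_of_conjTranspose_mul_mulVec_eq hA hB hf hg, fun h ↦ ?_⟩
  exact ⟨conjTranspose_mul_mulVec_eq_of_mulVec_eq hA h,
    conjTranspose_mul_mulVec_eq_of_mulVec_eq hB h.symm⟩
end

section
/- With A, B isometries, θ ∈ ℝ, L = [A B] the ν×(m+n) block matrix and Λ_θ the (m+n)×(m+n) block matrix −[[I, 2ie^{−iθ}sin(θ)·AᴴB],[2ie^{iθ}sin(θ)·BᴴA, I − 4sin²(θ)·BᴴA AᴴB]], we have U_θ L = L Λ_θ, where U_θ = −exp(iθ(2BBᴴ−I))·exp(iθ(2AAᴴ−I)). -/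
/-!
For an isometry `C`, the matrix `C Cᴴ` is an orthogonal projection, so `2 C Cᴴ - 1` is a reflection
and `exp (t (2 C Cᴴ - 1)) = eᵗ C Cᴴ + e⁻ᵗ (1 - C Cᴴ)`. Applying this to `A` and then to `B`, the
two column blocks of `U_θ L` are computed explicitly; they agree with those of `L Λ_θ` because
`e^{iθ} e^{-iθ} = 1` and `2i sin θ = e^{iθ} - e^{-iθ}`.
-/

open Matrix NormedSpace

section NormedAlgebra

variable {𝕂 𝔸 : Type*} [RCLike 𝕂] [NormedRing 𝔸] [NormedAlgebra 𝕂 𝔸] [CompleteSpace 𝔸]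

theorem NormedSpace.exp_mul_of_mul_eq_smul {a x : 𝔸} {c : 𝕂} (h : a * x = c • x) :
    exp a * x = exp c • x := by
  have hpow (k : ℕ) : a ^ k * x = c ^ k • x := by
    induction k with
    | zero => simp
    | succ k ih => rw [pow_succ', mul_assoc, ih, mul_smul_comm, h, smul_smul, ← pow_succ]
  refine ((exp_series_hasSum_exp' (𝕂 := 𝕂) a).mul_right x).unique ?_
  simpa only [smul_mul_assoc, hpow, smul_smul, smul_eq_mul] using
    (exp_series_hasSum_exp' (𝕂 := 𝕂) c).smul_const x

theorem IsIdempotentElem.exp_smul_two_smul_sub_one {p : 𝔸} (hp : IsIdempotentElem p) (t : 𝕂) :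
    exp (t • (2 • p - 1)) = exp t • p + exp (-t) • (1 - p) := by
  have hp' : (t • (2 • p - 1)) * p = t • p := by
    rw [smul_mul_assoc, sub_mul, two_smul, add_mul, hp.eq, one_mul, add_sub_cancel_right]
  have hq' : (t • (2 • p - 1)) * (1 - p) = (-t) • (1 - p) := by
    rw [mul_sub, mul_one, hp']
    module
  calc exp (t • (2 • p - 1)) = exp (t • (2 • p - 1)) * p + exp (t • (2 • p - 1)) * (1 - p) := by
        rw [← mul_add, add_sub_cancel, mul_one]
    _ = exp t • p + exp (-t) • (1 - p) := by
        rw [exp_mul_of_mul_eq_smul hp', exp_mul_of_mul_eq_smul hq']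

end NormedAlgebra

section Isometry

variable {𝕜 m n p : Type*} [RCLike 𝕜] [Fintype m] [Fintype n] [DecidableEq n]

theorem Matrix.isIdempotentElem_mul_conjTranspose {C : Matrix m n 𝕜} (hC : Cᴴ * C = 1) :
    IsIdempotentElem (C * Cᴴ) := by
  rw [IsIdempotentElem, Matrix.mul_assoc, ← Matrix.mul_assoc Cᴴ, hC, Matrix.one_mul]

variable [DecidableEq m]

theorem Matrix.exp_smul_reflection_mul {C : Matrix m n 𝕜} (hC : Cᴴ * C = 1) (t : 𝕜)
    (X : Matrix m p 𝕜) :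
    exp (t • (2 • (C * Cᴴ) - 1)) * X = exp (-t) • X + (exp t - exp (-t)) • (C * (Cᴴ * X)) := by
  have hexp : exp (t • (2 • (C * Cᴴ) - 1)) = exp t • (C * Cᴴ) + exp (-t) • (1 - C * Cᴴ) :=
    open scoped Norms.Operator in
    (isIdempotentElem_mul_conjTranspose hC).exp_smul_two_smul_sub_one t
  rw [hexp, Matrix.add_mul, Matrix.smul_mul, Matrix.smul_mul, Matrix.sub_mul, Matrix.one_mul,
    Matrix.mul_assoc]
  module

theorem Matrix.exp_smul_reflection_mul_self {C : Matrix m n 𝕜} (hC : Cᴴ * C = 1) (t : 𝕜) :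
    exp (t • (2 • (C * Cᴴ) - 1)) * C = exp t • C := by
  rw [exp_smul_reflection_mul hC, hC, Matrix.mul_one]
  module

end Isometry

theorem stmt_10 {ν m n : ℕ} (A : Matrix (Fin ν) (Fin m) ℂ) (B : Matrix (Fin ν) (Fin n) ℂ)
    (hA : Aᴴ * A = 1) (hB : Bᴴ * B = 1) (θ : ℝ) :
    let U : Matrix (Fin ν) (Fin ν) ℂ :=
      -(NormedSpace.exp ((Complex.I * (θ : ℂ)) • (2 • (B * Bᴴ) - 1))
        * NormedSpace.exp ((Complex.I * (θ : ℂ)) • (2 • (A * Aᴴ) - 1)))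
    let L : Matrix (Fin ν) (Fin m ⊕ Fin n) ℂ := fromCols A B
    let Λ : Matrix (Fin m ⊕ Fin n) (Fin m ⊕ Fin n) ℂ :=
      -(fromBlocks 1
          ((2 * Complex.I * Complex.exp (-(Complex.I * (θ : ℂ))) * (Real.sin θ : ℂ)) • (Aᴴ * B))
          ((2 * Complex.I * Complex.exp (Complex.I * (θ : ℂ)) * (Real.sin θ : ℂ)) • (Bᴴ * A))
          (1 - (4 * (Real.sin θ : ℂ) ^ 2) • (Bᴴ * A * (Aᴴ * B))))
    U * L = L * Λ := by
  dsimp only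
  simp only [Matrix.neg_mul, Matrix.mul_neg, Matrix.mul_assoc, mul_fromCols,
    fromCols_mul_fromBlocks, neg_inj]
  simp only [exp_smul_reflection_mul_self hA, exp_smul_reflection_mul hA, ← Complex.exp_eq_exp_ℂ]
  set t := Complex.I * (θ : ℂ)
  have hinv : Complex.exp t * Complex.exp (-t) = 1 := by
    rw [← Complex.exp_add, add_neg_cancel, Complex.exp_zero]
  have hsin : 2 * Complex.I * (Real.sin θ : ℂ) = Complex.exp t - Complex.exp (-t) := by
    rw [Complex.ofReal_sin, Complex.sin, neg_mul, mul_comm (θ : ℂ)]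
    linear_combination (Complex.exp (-t) - Complex.exp t) * Complex.I_sq
  have hsin_sq : 4 * (Real.sin θ : ℂ) ^ 2 = -(Complex.exp t - Complex.exp (-t)) ^ 2 := by
    linear_combination (-(Complex.exp t - Complex.exp (-t) + 2 * Complex.I * Real.sin θ)) * hsin
      + 4 * (Real.sin θ : ℂ) ^ 2 * Complex.I_sq
  congr 1
  · rw [Matrix.mul_smul, exp_smul_reflection_mul hB, Matrix.mul_one, Matrix.mul_smul,
      ← Complex.exp_eq_exp_ℂ]
    set X := B * (Bᴴ * A)
    linear_combination (norm := module) hinv • A - (Complex.exp t * hsin) • X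
  · rw [Matrix.mul_add, Matrix.mul_smul, Matrix.mul_smul, exp_smul_reflection_mul_self hB,
      exp_smul_reflection_mul hB, Matrix.mul_smul, Matrix.mul_sub, Matrix.mul_one, Matrix.mul_smul,
      ← Complex.exp_eq_exp_ℂ]
    set X := A * (Aᴴ * B)
    set Y := B * (Bᴴ * X)
    linear_combination (norm := module) hinv • B - (Complex.exp (-t) * hsin) • X + hsin_sq • Y
end

section
/- Under the conjugation D(f ⊕ g) = f ⊕ (ie^{i(θ+φ)}g), if cos φ = μ sin θ and sin θ ≠ 0, then D maps the μ-eigenspace of T = [[0, AᴴB],[BᴴA, 0]] bijectively onto the e^{2iφ}-eigenspace of Λ_θ, i.e., ker(e^{2iφ}I − Λ_θ) = D·ker(μI − T). -/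
open Matrix

theorem stmt_13 {ν m n : ℕ} (A : Matrix (Fin ν) (Fin m) ℂ) (B : Matrix (Fin ν) (Fin n) ℂ)
    (hA : Aᴴ * A = 1) (hB : Bᴴ * B = 1) (θ φ : ℝ) (μ : ℝ)
    (hθ : Real.sin θ ≠ 0) (hμ : Real.cos φ = μ * Real.sin θ)
    (f : Fin m → ℂ) (g : Fin n → ℂ) :
    let Λ : Matrix (Fin m ⊕ Fin n) (Fin m ⊕ Fin n) ℂ :=
      -(fromBlocks 1
          ((2 * Complex.I * Complex.exp (-(Complex.I * (θ : ℂ))) * (Real.sin θ : ℂ)) • (Aᴴ * B))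
          ((2 * Complex.I * Complex.exp (Complex.I * (θ : ℂ)) * (Real.sin θ : ℂ)) • (Bᴴ * A))
          (1 - (4 * (Real.sin θ : ℂ) ^ 2) • (Bᴴ * A * (Aᴴ * B))))
    let T : Matrix (Fin m ⊕ Fin n) (Fin m ⊕ Fin n) ℂ := fromBlocks 0 (Aᴴ * B) (Bᴴ * A) 0
    Λ.mulVec (Sum.elim f ((Complex.I * Complex.exp (Complex.I * ((θ : ℂ) + (φ : ℂ)))) • g))
        = Complex.exp (2 * Complex.I * (φ : ℂ)) •
          Sum.elim f ((Complex.I * Complex.exp (Complex.I * ((θ : ℂ) + (φ : ℂ)))) • g) ↔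
      T.mulVec (Sum.elim f g) = (μ : ℂ) • Sum.elim f g := by
  intro Λ T
  have hselim : ∀ (c : ℂ) (u : Fin m → ℂ) (v : Fin n → ℂ),
      c • Sum.elim u v = Sum.elim (c • u) (c • v) := by
    intro c u v; funext x; cases x <;> rfl
  have helim : ∀ {u u' : Fin m → ℂ} {v v' : Fin n → ℂ},
      Sum.elim u v = Sum.elim u' v' ↔ u = u' ∧ v = v' := by
    intro u u' v v'
    constructor
    · intro h
      exact ⟨funext fun a => congrFun h (Sum.inl a), funext fun b => congrFun h (Sum.inr b)⟩
    · rintro ⟨rfl, rfl⟩; rfl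
  have hnelim : ∀ (u : Fin m → ℂ) (v : Fin n → ℂ),
      -(Sum.elim u v) = Sum.elim (-u) (-v) := by
    intro u v; funext x; cases x <;> rfl
  simp only [Λ, T, neg_mulVec, fromBlocks_mulVec, Sum.elim_comp_inl, Sum.elim_comp_inr,
    one_mulVec, zero_mulVec, smul_mulVec, mulVec_smul, sub_mulVec, zero_add, add_zero,
    hselim, hnelim, helim]
  set cs : ℂ := ((Real.sin θ : ℝ) : ℂ) with hcs
  set eθ : ℂ := Complex.exp (Complex.I * (θ : ℂ)) with heθ
  set eφ : ℂ := Complex.exp (Complex.I * (φ : ℂ)) with heφ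
  set E : ℂ := Complex.exp (Complex.I * ((θ : ℂ) + (φ : ℂ))) with hEdef
  have hs0 : cs ≠ 0 := Complex.ofReal_ne_zero.mpr hθ
  have hE : E = eθ * eφ := by
    rw [hEdef, heθ, heφ, ← Complex.exp_add]; congr 1; ring
  have hlam : Complex.exp (2 * Complex.I * (φ : ℂ)) = eφ ^ 2 := by
    rw [heφ, sq, ← Complex.exp_add]; congr 1; ring
  have K1 : Complex.I * E * (2 * Complex.I * Complex.exp (-(Complex.I * (θ : ℂ))) * cs)
      = -(2 * cs * eφ) := by
    have h1 : E * Complex.exp (-(Complex.I * (θ : ℂ))) = eφ := by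
      rw [hEdef, heφ, ← Complex.exp_add]; congr 1; ring
    calc Complex.I * E * (2 * Complex.I * Complex.exp (-(Complex.I * (θ : ℂ))) * cs)
        = 2 * cs * (Complex.I * Complex.I) * (E * Complex.exp (-(Complex.I * (θ : ℂ)))) := by
          ring
      _ = -(2 * cs * eφ) := by rw [Complex.I_mul_I, h1]; ring
  have hφI : Complex.exp ((φ : ℂ) * Complex.I) = eφ := by
    rw [heφ]; congr 1; ring
  have hmm : eφ * Complex.exp (-(φ : ℂ) * Complex.I) = 1 := by
    rw [heφ, ← Complex.exp_add,
      show Complex.I * (φ : ℂ) + -(φ : ℂ) * Complex.I = 0 by ring, Complex.exp_zero]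
  have hcos : eφ ^ 2 + 1 = 2 * (μ : ℂ) * cs * eφ := by
    have h2c := Complex.two_cos (φ : ℂ)
    have hcast : Complex.cos (φ : ℂ) = (μ : ℂ) * cs := by
      rw [← Complex.ofReal_cos, hμ, hcs]; push_cast; ring
    rw [hcast] at h2c
    linear_combination -eφ * h2c - eφ * hφI - hmm
  have hκ1 : (-(2 * cs * eφ) : ℂ) ≠ 0 :=
    neg_ne_zero.mpr (mul_ne_zero (mul_ne_zero two_ne_zero hs0) (Complex.exp_ne_zero _))
  have hκ2 : (2 * cs * Complex.I * eθ * eφ ^ 2 : ℂ) ≠ 0 :=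
    mul_ne_zero (mul_ne_zero (mul_ne_zero (mul_ne_zero two_ne_zero hs0) Complex.I_ne_zero)
      (Complex.exp_ne_zero _)) (pow_ne_zero _ (Complex.exp_ne_zero _))
  constructor
  · rintro ⟨h1, h2⟩
    have hp : (Aᴴ * B) *ᵥ g = (μ : ℂ) • f := by
      refine smul_right_injective _ hκ1 ?_
      linear_combination (norm := module) -h1 - K1 • ((Aᴴ * B) *ᵥ g)
        - hlam • f - hcos • f
    have hqp : (Bᴴ * A * (Aᴴ * B)) *ᵥ g = (μ : ℂ) • ((Bᴴ * A) *ᵥ f) := by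
      rw [← mulVec_mulVec, hp, mulVec_smul]
    rw [hqp] at h2
    refine ⟨hp, ?_⟩
    refine smul_right_injective _ hκ2 ?_
    linear_combination (norm := module) h2
      + ((2 * cs * Complex.I * eθ) * hcos - (4 * Complex.I * cs ^ 2 * (μ : ℂ)) * hE)
          • ((Bᴴ * A) *ᵥ f)
      + ((Complex.I * E) * hlam + (Complex.I * E) * hcos
          + (2 * (μ : ℂ) * cs * eφ * Complex.I) * hE) • g
  · rintro ⟨hp, hq⟩
    have hqp : (Bᴴ * A * (Aᴴ * B)) *ᵥ g = (μ : ℂ) • ((Bᴴ * A) *ᵥ f) := by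
      rw [← mulVec_mulVec, hp, mulVec_smul]
    constructor
    · rw [hp]
      match_scalars
      linear_combination -(μ : ℂ) * K1 - hlam - hcos
    · rw [hqp, hq]
      match_scalars
      linear_combination (-(Complex.I * E)) * hlam + (-(Complex.I * E) - 2 * Complex.I * eθ * cs * (μ : ℂ)) * hcos
        + (-(2 * Complex.I * (μ : ℂ) * cs * eφ) + 4 * Complex.I * cs ^ 2 * (μ : ℂ) ^ 2) * hE
end

section
/- Suppose ψ = Af = Bg for some f ∈ ℂ^m, g ∈ ℂ^n, with A, B isometries, i.e., ψ ∈ 𝒜 ∩ ℬ. Then f ⊕ g is a (+1)-eigenvector of T = [[0, AᴴB],[BᴴA, 0]] and f ⊕ (−g) is a (−1)-eigenvector of T. Conversely, if T(f⊕g) = f⊕g then Af = Bg. -/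
open Matrix

theorem stmt_16 {ν m n : ℕ} (A : Matrix (Fin ν) (Fin m) ℂ) (B : Matrix (Fin ν) (Fin n) ℂ)
    (hA : Aᴴ * A = 1) (hB : Bᴴ * B = 1) :
    (∀ (ψ : Fin ν → ℂ) (f : Fin m → ℂ) (g : Fin n → ℂ),
        A.mulVec f = ψ → B.mulVec g = ψ →
        (fromBlocks 0 (Aᴴ * B) (Bᴴ * A) 0).mulVec (Sum.elim f g) = Sum.elim f g ∧
        (fromBlocks 0 (Aᴴ * B) (Bᴴ * A) 0).mulVec (Sum.elim f (-g))
          = -(Sum.elim f (-g))) ∧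
      (∀ (f : Fin m → ℂ) (g : Fin n → ℂ),
        (fromBlocks 0 (Aᴴ * B) (Bᴴ * A) 0).mulVec (Sum.elim f g) = Sum.elim f g →
        A.mulVec f = B.mulVec g) := by
  constructor
  · intro ψ f g hf hg
    have h1 : (Aᴴ * B).mulVec g = f := by
      rw [← Matrix.mulVec_mulVec, hg, ← hf, Matrix.mulVec_mulVec, hA, Matrix.one_mulVec]
    have h2 : (Bᴴ * A).mulVec f = g := by
      rw [← Matrix.mulVec_mulVec, hf, ← hg, Matrix.mulVec_mulVec, hB, Matrix.one_mulVec]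
    constructor
    · rw [Matrix.fromBlocks_mulVec]
      simp [h1, h2]
    · rw [Matrix.fromBlocks_mulVec]
      have h1' : (Aᴴ * B).mulVec (-g) = -f := by rw [Matrix.mulVec_neg, h1]
      simp [h1', h2, Sum.elim_neg_neg]
      ext (i | i) <;> simp
  · intro f g h
    rw [Matrix.fromBlocks_mulVec] at h
    have h1 : (Aᴴ * B).mulVec g = f := by
      funext i
      have := congrFun h (Sum.inl i)
      simpa using this
    have h2 : (Bᴴ * A).mulVec f = g := by
      funext i
      have := congrFun h (Sum.inr i)
      simpa using this
    set v := A.mulVec f - B.mulVec g with hv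
    have key : star v ⬝ᵥ v = 0 := by
      have e1 : star (A.mulVec f) ⬝ᵥ A.mulVec f = star f ⬝ᵥ f := by
        rw [Matrix.star_mulVec, ← Matrix.dotProduct_mulVec, Matrix.mulVec_mulVec, hA,
          Matrix.one_mulVec]
      have e2 : star (A.mulVec f) ⬝ᵥ B.mulVec g = star f ⬝ᵥ f := by
        rw [Matrix.star_mulVec, ← Matrix.dotProduct_mulVec, Matrix.mulVec_mulVec, h1]
      have e3 : star (B.mulVec g) ⬝ᵥ A.mulVec f = star g ⬝ᵥ g := by
        rw [Matrix.star_mulVec, ← Matrix.dotProduct_mulVec, Matrix.mulVec_mulVec, h2]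
      have e4 : star (B.mulVec g) ⬝ᵥ B.mulVec g = star g ⬝ᵥ g := by
        rw [Matrix.star_mulVec, ← Matrix.dotProduct_mulVec, Matrix.mulVec_mulVec, hB,
          Matrix.one_mulVec]
      rw [hv, star_sub, sub_dotProduct, dotProduct_sub, dotProduct_sub,
        e1, e2, e3, e4]
      ring
    have : v = 0 := by
      open scoped ComplexOrder in
      rwa [dotProduct_star_self_eq_zero] at key
    exact sub_eq_zero.mp this
end
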